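/- Let g be a continuous symmetric positive-definite covariant 2-tensor field on a domain U ⊆ ℝⁿ. Let B be an open ball with closure contained in U, centered at x, of radius r, on which (1/k)·‖v‖ ≤ (g_a(v,v))^{1/2} ≤ k·‖v‖ holds for all a ∈ closure(B) and v ∈ ℝⁿ, for some k > 0. Then any smooth path γ : [0,1] → U with γ(0) = x whose image is not contained in B satisfies ℓ(γ) = ∫₀¹ (g_{γ(t)}(γ'(t), γ'(t)))^{1/2} dt ≥ r/k. -/

import Mathlib

open MeasureTheory

/-- The `g`-length of a path `γ`: `∫₀¹ √(g_{γ(t)}(γ'(t), γ'(t))) dt`. -/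
noncomputable def glen {n : ℕ}
    (g : EuclideanSpace ℝ (Fin n) →
      EuclideanSpace ℝ (Fin n) →ₗ[ℝ] EuclideanSpace ℝ (Fin n) →ₗ[ℝ] ℝ)
    (γ : ℝ → EuclideanSpace ℝ (Fin n)) : ℝ :=
  ∫ t in (0:ℝ)..1, Real.sqrt (g (γ t) (deriv γ t) (deriv γ t))

/-- The pseudodistance induced by `g` on `U`: the infimum of `g`-lengths of
smooth paths in `U` joining two points. -/
noncomputable def gdist {n : ℕ} (U : Set (EuclideanSpace ℝ (Fin n)))
    (g : EuclideanSpace ℝ (Fin n) →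
      EuclideanSpace ℝ (Fin n) →ₗ[ℝ] EuclideanSpace ℝ (Fin n) →ₗ[ℝ] ℝ)
    (p q : EuclideanSpace ℝ (Fin n)) : ℝ :=
  sInf { L : ℝ | ∃ γ : ℝ → EuclideanSpace ℝ (Fin n), ContDiff ℝ (⊤ : ℕ∞) γ ∧
    (∀ t ∈ Set.Icc (0:ℝ) 1, γ t ∈ U) ∧ γ 0 = p ∧ γ 1 = q ∧ L = glen g γ }

/-- If on the closed ball `closure (B(x,r)) ⊆ U` one has
`(1/k)‖v‖ ≤ √(g_a(v,v)) ≤ k‖v‖`, then any smooth path in `U` starting at `x`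
whose image (over `[0,1]`) is not contained in `B(x,r)` has `g`-length at
least `r/k`. -/
theorem glen_ge_of_escapes_ball {n : ℕ} (U : Set (EuclideanSpace ℝ (Fin n)))
    (hU : IsOpen U)
    (g : EuclideanSpace ℝ (Fin n) →
      EuclideanSpace ℝ (Fin n) →ₗ[ℝ] EuclideanSpace ℝ (Fin n) →ₗ[ℝ] ℝ)
    (hcont : Continuous fun p : EuclideanSpace ℝ (Fin n) ×
      EuclideanSpace ℝ (Fin n) × EuclideanSpace ℝ (Fin n) => g p.1 p.2.1 p.2.2)
    (hsymm : ∀ u v w, g u v w = g u w v)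
    (hdef : ∀ u ∈ U, ∀ v, v ≠ 0 → 0 < g u v v)
    (x : EuclideanSpace ℝ (Fin n)) (r k : ℝ) (hr : 0 < r) (hk : 0 < k)
    (hB : closure (Metric.ball x r) ⊆ U)
    (hbound : ∀ a ∈ closure (Metric.ball x r), ∀ v : EuclideanSpace ℝ (Fin n),
      (1 / k) * ‖v‖ ≤ Real.sqrt (g a v v) ∧ Real.sqrt (g a v v) ≤ k * ‖v‖)
    (γ : ℝ → EuclideanSpace ℝ (Fin n)) (hγ : ContDiff ℝ (⊤ : ℕ∞) γ)
    (hγU : ∀ t ∈ Set.Icc (0:ℝ) 1, γ t ∈ U) (h0 : γ 0 = x)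
    (hout : ∃ t ∈ Set.Icc (0:ℝ) 1, γ t ∉ Metric.ball x r) :
    r / k ≤ glen g γ := by
  classical
  obtain ⟨t₁, ht₁, hmem⟩ := hout
  have hγc : Continuous γ := hγ.continuous
  have hd : Continuous (deriv γ) := hγ.continuous_deriv (by simp)
  set S : Set ℝ := Set.Icc (0:ℝ) 1 ∩ {t | r ≤ dist (γ t) x} with hSdef
  have hSne : S.Nonempty := ⟨t₁, ht₁, by simpa [Metric.mem_ball, not_lt] using hmem⟩
  have hSclosed : IsClosed S :=
    isClosed_Icc.inter (isClosed_le continuous_const (hγc.dist continuous_const))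
  have hSbdd : BddBelow S := ⟨0, fun t ht => ht.1.1⟩
  set t₀ := sInf S with ht₀
  have ht₀S : t₀ ∈ S := hSclosed.csInf_mem hSne hSbdd
  have ht₀0 : 0 ≤ t₀ := ht₀S.1.1
  have ht₀1 : t₀ ≤ 1 := ht₀S.1.2
  have hrt₀ : r ≤ dist (γ t₀) x := ht₀S.2
  have h0lt : 0 < t₀ := by
    rcases lt_or_eq_of_le ht₀0 with h | h
    · exact h
    · exfalso
      have := hrt₀
      rw [← h, h0, dist_self] at this
      linarith
  have hIco : Set.MapsTo γ (Set.Ico 0 t₀) (Metric.ball x r) := by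
    intro t ht
    have htS : t ∉ S := fun htS => absurd (csInf_le hSbdd htS) (not_le.mpr ht.2)
    have htI : t ∈ Set.Icc (0:ℝ) 1 := ⟨ht.1, le_trans ht.2.le ht₀1⟩
    have : ¬ r ≤ dist (γ t) x := fun h => htS ⟨htI, h⟩
    simpa [Metric.mem_ball, dist_comm] using not_le.mp this
  have hIcc : Set.MapsTo γ (Set.Icc 0 t₀) (closure (Metric.ball x r)) := by
    have := hIco.closure hγc
    rwa [closure_Ico h0lt.ne] at this
  -- integrand continuity
  have hfc : Continuous fun t => Real.sqrt (g (γ t) (deriv γ t) (deriv γ t)) := by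
    have : Continuous fun t => g (γ t) (deriv γ t) (deriv γ t) :=
      hcont.comp (hγc.prodMk (hd.prodMk hd))
    exact Real.continuous_sqrt.comp this
  have hint : ∀ a b : ℝ, IntervalIntegrable
      (fun t => Real.sqrt (g (γ t) (deriv γ t) (deriv γ t))) volume a b :=
    fun a b => hfc.intervalIntegrable a b
  have hintn : IntervalIntegrable (fun t => (1/k) * ‖deriv γ t‖) volume 0 t₀ :=
    (continuous_const.mul hd.norm).intervalIntegrable 0 t₀
  -- step 1: glen ≥ ∫₀^{t₀}
  have step1 : (∫ t in (0:ℝ)..t₀, Real.sqrt (g (γ t) (deriv γ t) (deriv γ t)))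
      ≤ glen g γ := by
    rw [glen, ← intervalIntegral.integral_add_adjacent_intervals (hint 0 t₀) (hint t₀ 1)]
    have : 0 ≤ ∫ t in t₀..1, Real.sqrt (g (γ t) (deriv γ t) (deriv γ t)) :=
      intervalIntegral.integral_nonneg ht₀1 (fun t _ => Real.sqrt_nonneg _)
    linarith
  -- step 2: pointwise bound
  have step2 : (∫ t in (0:ℝ)..t₀, (1/k) * ‖deriv γ t‖)
      ≤ ∫ t in (0:ℝ)..t₀, Real.sqrt (g (γ t) (deriv γ t) (deriv γ t)) := by
    apply intervalIntegral.integral_mono_on ht₀0 hintn (hint 0 t₀)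
    intro t ht
    exact (hbound (γ t) (hIcc ht) (deriv γ t)).1
  -- step 3: FTC
  have hdiff : ∀ t ∈ Set.uIcc (0:ℝ) t₀, DifferentiableAt ℝ γ t :=
    fun t _ => hγ.differentiable (by simp) t
  have hderint : IntervalIntegrable (deriv γ) volume 0 t₀ := hd.intervalIntegrable 0 t₀
  have hftc : (∫ t in (0:ℝ)..t₀, deriv γ t) = γ t₀ - γ 0 :=
    intervalIntegral.integral_deriv_eq_sub hdiff hderint
  have hnorm : ‖γ t₀ - γ 0‖ ≤ ∫ t in (0:ℝ)..t₀, ‖deriv γ t‖ := by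
    rw [← hftc]
    exact intervalIntegral.norm_integral_le_integral_norm ht₀0
  have hrle : r ≤ ∫ t in (0:ℝ)..t₀, ‖deriv γ t‖ := by
    have : r ≤ ‖γ t₀ - γ 0‖ := by
      rw [h0, ← dist_eq_norm]; exact hrt₀
    linarith
  have step3 : r / k ≤ ∫ t in (0:ℝ)..t₀, (1/k) * ‖deriv γ t‖ := by
    rw [intervalIntegral.integral_const_mul]
    have h1k : 0 < 1/k := by positivity
    calc r / k = (1/k) * r := by ring
      _ ≤ (1/k) * ∫ t in (0:ℝ)..t₀, ‖deriv γ t‖ := by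
          exact mul_le_mul_of_nonneg_left hrle h1k.le
  linarith
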